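/- Let U be a unitary on H_A ⊗ H_B mapping orthonormal vectors |ψ_j⟩, 1 ≤ j ≤ d_A, to |v_j⟩ ⊗ |0⟩_B with {|v_j⟩} orthonormal in H_A, and mapping |ψ_j⟩ for d_A < j ≤ k to vectors |w_j⟩ satisfying ⟨0|_B Tr_A(|w_j⟩⟨w_j|) |0⟩_B = 0. If moreover Tr_{B̄}(Σ_{j>d_A} p_j |w_j⟩⟨w_j|) = (Σ_{j>d_A} p_j / Σ_{j≤d_A} p_j) · Σ_{j≤d_A} p_j |v_j⟩⟨v_j|, then F(ρ_AB, U†(ρ_A^{out} ⊗ |0⟩⟨0|_B)U) = Σ_{j=1}^{d_A} p_j, where ρ_AB = Σ_{j=1}^k p_j|ψ_j⟩⟨ψ_j| with decreasing p_j and ρ_A^{out} = Tr_B(U ρ_AB U†). -/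

import Mathlib

open Matrix Kronecker Finset ComplexOrder

noncomputable section
namespace QAE

/-- Partial trace over the second tensor factor. -/
def ptraceB {A B : Type*} [Fintype B] (ρ : Matrix (A × B) (A × B) ℂ) : Matrix A A ℂ :=
  Matrix.of fun i j => ∑ k : B, ρ (i, k) (j, k)

/-- Partial trace over the first tensor factor. -/
def ptraceA {A B : Type*} [Fintype A] (ρ : Matrix (A × B) (A × B) ℂ) : Matrix B B ℂ :=
  Matrix.of fun i j => ∑ k : A, ρ (k, i) (k, j)

/-- Outer product |v⟩⟨v|. -/
def outer {A : Type*} (v : A → ℂ) : Matrix A A ℂ := Matrix.vecMulVec v (star v)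

/-- The positive semidefinite square root (the former `Matrix.PosSemidef.sqrt`). -/
def psdSqrt {n : Type*} [Fintype n] [DecidableEq n] {A : Matrix n n ℂ} (hA : A.PosSemidef) :
    Matrix n n ℂ :=
  hA.1.eigenvectorUnitary.1 * diagonal ((↑) ∘ (√·) ∘ hA.1.eigenvalues) *
  (star hA.1.eigenvectorUnitary : Matrix n n ℂ)

lemma posSemidef_psdSqrt {n : Type*} [Fintype n] [DecidableEq n] {A : Matrix n n ℂ}
    (hA : A.PosSemidef) : (psdSqrt hA).PosSemidef := by
  have hd : (diagonal ((↑) ∘ (√·) ∘ hA.1.eigenvalues : n → ℂ)).PosSemidef := by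
    refine Matrix.PosSemidef.diagonal ?_
    intro i
    simp only [Pi.zero_apply, Function.comp_apply]
    exact_mod_cast Real.sqrt_nonneg _
  have h := hd.mul_mul_conjTranspose_same (hA.1.eigenvectorUnitary.1)
  unfold psdSqrt
  rw [Matrix.star_eq_conjTranspose]
  exact h

lemma sandwich_psd {n : Type*} [Fintype n] [DecidableEq n] {ρ σ : Matrix n n ℂ}
    (hρ : ρ.PosSemidef) (hσ : σ.PosSemidef) :
    (psdSqrt hσ * ρ * psdSqrt hσ).PosSemidef := by
  have h := hρ.mul_mul_conjTranspose_same (psdSqrt hσ)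
  rwa [(posSemidef_psdSqrt hσ).isHermitian.eq] at h

-- Squared Uhlmann fidelity F(ρ,σ) = (Tr √(σ^{1/2} ρ σ^{1/2}))².
open Classical in
def sqFidelity {n : Type*} [Fintype n] [DecidableEq n] (ρ σ : Matrix n n ℂ) : ℝ :=
  if h : ρ.PosSemidef ∧ σ.PosSemidef then
    ((psdSqrt (sandwich_psd h.1 h.2)).trace).re ^ 2
  else 0

/-- A density matrix: positive semidefinite with unit trace. -/
def IsDensity {n : Type*} [Fintype n] [DecidableEq n] (ρ : Matrix n n ℂ) : Prop :=
  ρ.PosSemidef ∧ ρ.trace = 1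

end QAE
end

/-!
Write `P = ∑_{j < d_A} p_j`. The encoder sends `ψ_j` (`j < d_A`) to `v_j ⊗ b₀`, so the marginal
condition turns the compressed state into `ρ_A^out = P⁻¹ ∑_{j < d_A} p_j |v_j⟩⟨v_j|`, and decoding
`ρ_A^out ⊗ |b₀⟩⟨b₀|` gives `σ = P⁻¹ ∑_{j < d_A} p_j |ψ_j⟩⟨ψ_j|`. Both `ρ_AB` and `σ` are diagonal in
the orthonormal family `ψ`, so their fidelity is the classical one,
`(∑_{j < d_A} √(p_j · p_j / P))² = P`.
-/

namespace QAE

section Outer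

variable {ι m n : Type*}

def IsOrthonormal [Fintype n] [DecidableEq ι] (e : ι → n → ℂ) : Prop :=
  ∀ i j, star (e i) ⬝ᵥ e j = if i = j then 1 else 0

lemma trace_outer [Fintype n] (x : n → ℂ) : (outer x).trace = star x ⬝ᵥ x := by
  rw [outer, trace_vecMulVec, dotProduct_comm]

lemma posSemidef_sum_smul_outer [Fintype n] (s : Finset ι) (c : ι → ℝ) (hc : ∀ i, 0 ≤ c i)
    (e : ι → n → ℂ) : (∑ i ∈ s, (c i : ℂ) • outer (e i)).PosSemidef :=
  posSemidef_sum s fun i _ =>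
    (posSemidef_vecMulVec_self_star (e i)).smul (Complex.zero_le_real.mpr (hc i))

lemma mul_outer_mul_conjTranspose [Fintype n] (M : Matrix m n ℂ) (x : n → ℂ) :
    M * outer x * Mᴴ = outer (M *ᵥ x) := by
  rw [outer, mul_vecMulVec, vecMulVec_mul, outer, star_mulVec]

lemma mul_sum_smul_outer_mul_conjTranspose [Fintype n] (M : Matrix m n ℂ) (s : Finset ι)
    (c : ι → ℂ) (x : ι → n → ℂ) :
    M * (∑ i ∈ s, c i • outer (x i)) * Mᴴ = ∑ i ∈ s, c i • outer (M *ᵥ x i) := by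
  rw [Matrix.mul_sum, Matrix.sum_mul]
  simp_rw [Matrix.mul_smul, Matrix.smul_mul, mul_outer_mul_conjTranspose]

lemma outer_kronecker_outer (x : m → ℂ) (y : n → ℂ) :
    outer x ⊗ₖ outer y = outer (fun ab : m × n => x ab.1 * y ab.2) := by
  ext ⟨i, k⟩ ⟨j, l⟩
  simp only [kroneckerMap_apply, outer, vecMulVec_apply, Pi.star_apply, star_mul']
  ring

variable [Fintype n] [DecidableEq ι] {e : ι → n → ℂ}

lemma outer_mul_outer_of_isOrthonormal (he : IsOrthonormal e) (i j : ι) :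
    outer (e i) * outer (e j) = if i = j then outer (e i) else 0 := by
  rw [outer, outer, vecMulVec_mul_vecMulVec, he]
  split_ifs with h
  · rw [one_smul, h]
  · rw [zero_smul, vecMulVec_zero]

lemma sum_smul_outer_mul_sum_smul_outer (he : IsOrthonormal e) (s t : Finset ι) (a b : ι → ℂ) :
    (∑ i ∈ s, a i • outer (e i)) * (∑ j ∈ t, b j • outer (e j))
      = ∑ i ∈ s ∩ t, (a i * b i) • outer (e i) := by
  simp_rw [Finset.sum_mul_sum, smul_mul_assoc, mul_smul_comm,
    outer_mul_outer_of_isOrthonormal he, smul_ite, smul_zero, smul_smul, Finset.sum_ite_eq,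
    ← Finset.sum_filter, Finset.filter_mem_eq_inter]

end Outer

open scoped MatrixOrder in
lemma eq_psdSqrt_of_sq_eq {n : Type*} [Fintype n] [DecidableEq n] {A B : Matrix n n ℂ}
    (hB : B.PosSemidef) (hA : A.PosSemidef) (h : B ^ 2 = A) : B = psdSqrt hA := by
  have hsqrt : psdSqrt hA = CFC.sqrt A := by
    rw [CFC.sqrt_eq_real_sqrt A hA.nonneg, cfcₙ_eq_cfc, hA.1.cfc_eq]
    rfl
  rw [hsqrt, CFC.sqrt_unique (by rw [← h, sq]) hB.nonneg]

section Fidelity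

variable {ι n : Type*} [Fintype n] [DecidableEq n] [DecidableEq ι] {e : ι → n → ℂ}

lemma psdSqrt_eq_sum_smul_outer (he : IsOrthonormal e) {M : Matrix n n ℂ} (hM : M.PosSemidef)
    (s : Finset ι) (c : ι → ℝ) (hc : ∀ i, 0 ≤ c i) (h : M = ∑ i ∈ s, (c i : ℂ) • outer (e i)) :
    psdSqrt hM = ∑ i ∈ s, (√(c i) : ℂ) • outer (e i) := by
  refine (eq_psdSqrt_of_sq_eq (posSemidef_sum_smul_outer s _ (fun i => Real.sqrt_nonneg _) e)
    hM ?_).symm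
  rw [h, sq, sum_smul_outer_mul_sum_smul_outer he, Finset.inter_self]
  refine Finset.sum_congr rfl fun i _ => ?_
  rw [← Complex.ofReal_mul, Real.mul_self_sqrt (hc i)]

lemma sqFidelity_sum_smul_outer (he : IsOrthonormal e) (s t : Finset ι) (a b : ι → ℝ)
    (ha : ∀ i, 0 ≤ a i) (hb : ∀ i, 0 ≤ b i) :
    sqFidelity (∑ i ∈ s, (a i : ℂ) • outer (e i)) (∑ i ∈ t, (b i : ℂ) • outer (e i))
      = (∑ i ∈ s ∩ t, √(a i * b i)) ^ 2 := by
  have hρ := posSemidef_sum_smul_outer s a ha e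
  have hσ := posSemidef_sum_smul_outer t b hb e
  have hsandwich : psdSqrt hσ * (∑ i ∈ s, (a i : ℂ) • outer (e i)) * psdSqrt hσ
      = ∑ i ∈ s ∩ t, ((a i * b i : ℝ) : ℂ) • outer (e i) := by
    rw [psdSqrt_eq_sum_smul_outer he hσ t b hb rfl, sum_smul_outer_mul_sum_smul_outer he,
      sum_smul_outer_mul_sum_smul_outer he, Finset.inter_right_comm, Finset.inter_self,
      Finset.inter_comm]
    refine Finset.sum_congr rfl fun i _ => ?_
    rw [mul_right_comm, ← Complex.ofReal_mul, Real.mul_self_sqrt (hb i), Complex.ofReal_mul,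
      mul_comm]
  rw [sqFidelity, dif_pos ⟨hρ, hσ⟩, psdSqrt_eq_sum_smul_outer he _ (s ∩ t) _
    (fun i => mul_nonneg (ha i) (hb i)) hsandwich, trace_sum]
  simp only [trace_smul, trace_outer, he _ _, ↓reduceIte, smul_eq_mul, mul_one,
    ← Complex.ofReal_sum, Complex.ofReal_re]

end Fidelity

section PartialTrace

variable {ι A B : Type*} [Fintype B]

lemma ptraceB_add (M N : Matrix (A × B) (A × B) ℂ) : ptraceB (M + N) = ptraceB M + ptraceB N := by
  ext i j
  simp [ptraceB, Finset.sum_add_distrib]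

lemma ptraceB_smul (c : ℂ) (M : Matrix (A × B) (A × B) ℂ) : ptraceB (c • M) = c • ptraceB M := by
  ext i j
  simp [ptraceB, Finset.mul_sum]

lemma ptraceB_sum (s : Finset ι) (f : ι → Matrix (A × B) (A × B) ℂ) :
    ptraceB (∑ i ∈ s, f i) = ∑ i ∈ s, ptraceB (f i) := by
  ext i j
  simp only [ptraceB, of_apply, Matrix.sum_apply]
  exact Finset.sum_comm

lemma ptraceB_outer_prod (x : A → ℂ) (b : B → ℂ) :
    ptraceB (outer (fun ab : A × B => x ab.1 * b ab.2)) = (star b ⬝ᵥ b) • outer x := by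
  ext i j
  simp only [ptraceB, outer, of_apply, vecMulVec_apply, Pi.star_apply, Matrix.smul_apply,
    smul_eq_mul, dotProduct, Finset.sum_mul, star_mul']
  exact Finset.sum_congr rfl fun _ _ => by ring

end PartialTrace

lemma sum_kronecker {ι l m n p : Type*} (s : Finset ι) (f : ι → Matrix l m ℂ) (K : Matrix n p ℂ) :
    (∑ i ∈ s, f i) ⊗ₖ K = ∑ i ∈ s, f i ⊗ₖ K :=
  map_sum ((kroneckerBilinear (R := ℂ)).flip K) f s

lemma conjTranspose_mul_sum_smul_outer_kronecker_mul {ι A B : Type*} [Fintype A] [Fintype B]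
    [DecidableEq A] [DecidableEq B]
    {U : Matrix (A × B) (A × B) ℂ} (hU : Uᴴ * U = 1) (s : Finset ι) (c : ι → ℂ)
    (x : ι → A × B → ℂ) (v : ι → A → ℂ) (b : B → ℂ)
    (hx : ∀ i ∈ s, U *ᵥ x i = fun ab => v i ab.1 * b ab.2) :
    Uᴴ * ((∑ i ∈ s, c i • outer (v i)) ⊗ₖ outer b) * U = ∑ i ∈ s, c i • outer (x i) := by
  calc Uᴴ * ((∑ i ∈ s, c i • outer (v i)) ⊗ₖ outer b) * U
      = Uᴴ * (∑ i ∈ s, c i • outer (U *ᵥ x i)) * Uᴴᴴ := by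
        rw [conjTranspose_conjTranspose, sum_kronecker]
        congr 2
        refine Finset.sum_congr rfl fun i hi => ?_
        rw [smul_kronecker, outer_kronecker_outer, hx i hi]
    _ = ∑ i ∈ s, c i • outer (x i) := by
        simp_rw [mul_sum_smul_outer_mul_conjTranspose, mulVec_mulVec, hU, one_mulVec]

lemma sum_eq_sum_filter_lt_add_sum_filter_le {ι α M : Type*} [LinearOrder α] [AddCommMonoid M]
    (s : Finset ι) (g : ι → α) (a : α) (f : ι → M) :
    ∑ i ∈ s, f i = ∑ i ∈ s with g i < a, f i + ∑ i ∈ s with a ≤ g i, f i := by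
  rw [← Finset.sum_filter_add_sum_filter_not s (fun i => g i < a) f]
  simp only [not_lt]

lemma sq_sum_sqrt_mul_div_sum {ι : Type*} (s : Finset ι) (p : ι → ℝ) (hp : ∀ i, 0 ≤ p i) :
    (∑ i ∈ s, √(p i * (p i / ∑ j ∈ s, p j))) ^ 2 = ∑ i ∈ s, p i := by
  have hsqrt : ∀ i ∈ s, √(p i * (p i / ∑ j ∈ s, p j)) = p i / √(∑ j ∈ s, p j) := fun i _ => by
    rw [← mul_div_assoc, Real.sqrt_div (mul_self_nonneg _), Real.sqrt_mul_self (hp i)]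
  rw [Finset.sum_congr rfl hsqrt, ← Finset.sum_div, div_pow,
    Real.sq_sqrt (Finset.sum_nonneg fun i _ => hp i), sq, mul_self_div_self]

end QAE

open QAE in
theorem stmt7_general {A B : Type*} [Fintype A] [Fintype B] [DecidableEq A] [DecidableEq B]
    {k : ℕ}
    (p : Fin k → ℝ) (hp0 : ∀ j, 0 ≤ p j) (hp1 : ∑ j, p j = 1)
    (hpd : 0 < ∑ j ∈ Finset.univ.filter (fun j : Fin k => (j : ℕ) < Fintype.card A), p j)
    (ψ : Fin k → (A × B) → ℂ)
    (hψ : ∀ i j, star (ψ i) ⬝ᵥ ψ j = if i = j then 1 else 0)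
    (v : Fin k → A → ℂ)
    (b0 : B → ℂ) (hb0 : star b0 ⬝ᵥ b0 = 1)
    (U : Matrix (A × B) (A × B) ℂ) (hU : Uᴴ * U = 1 ∧ U * Uᴴ = 1)
    (hmap : ∀ j : Fin k, (j : ℕ) < Fintype.card A →
      U *ᵥ ψ j = fun ab => v j ab.1 * b0 ab.2)
    (w : Fin k → (A × B) → ℂ)
    (hw : ∀ j : Fin k, Fintype.card A ≤ (j : ℕ) → w j = U *ᵥ ψ j)
    (hmarg :
      QAE.ptraceB (∑ j ∈ Finset.univ.filter (fun j : Fin k => Fintype.card A ≤ (j : ℕ)),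
          (p j : ℂ) • QAE.outer (w j))
        = (((∑ j ∈ Finset.univ.filter (fun j : Fin k => Fintype.card A ≤ (j : ℕ)), p j) /
            (∑ j ∈ Finset.univ.filter (fun j : Fin k => (j : ℕ) < Fintype.card A), p j) : ℝ) : ℂ)
          • ∑ j ∈ Finset.univ.filter (fun j : Fin k => (j : ℕ) < Fintype.card A),
              (p j : ℂ) • QAE.outer (v j))
    (ρAB : Matrix (A × B) (A × B) ℂ) (hρ : ρAB = ∑ j, (p j : ℂ) • QAE.outer (ψ j)) :
    QAE.sqFidelity ρAB (Uᴴ * ((QAE.ptraceB (U * ρAB * Uᴴ)) ⊗ₖ QAE.outer b0) * U)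
      = ∑ j ∈ Finset.univ.filter (fun j : Fin k => (j : ℕ) < Fintype.card A), p j := by
  set lo := Finset.univ.filter (fun j : Fin k => (j : ℕ) < Fintype.card A)
  set hi := Finset.univ.filter (fun j : Fin k => Fintype.card A ≤ (j : ℕ))
  have hscalar : 1 + (∑ j ∈ hi, p j) / ∑ j ∈ lo, p j = 1 / ∑ j ∈ lo, p j := by
    field_simp
    rw [← hp1, sum_eq_sum_filter_lt_add_sum_filter_le Finset.univ (fun j : Fin k => (j : ℕ))
      (Fintype.card A) p]
  have hUρ : U * ρAB * Uᴴ = ∑ j ∈ lo, (p j : ℂ) • outer (fun ab : A × B => v j ab.1 * b0 ab.2)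
      + ∑ j ∈ hi, (p j : ℂ) • outer (w j) := by
    rw [hρ, mul_sum_smul_outer_mul_conjTranspose,
      sum_eq_sum_filter_lt_add_sum_filter_le _ (fun j : Fin k => (j : ℕ)) (Fintype.card A)]
    congr 1 <;> refine Finset.sum_congr rfl fun j hj => ?_
    · rw [hmap j (Finset.mem_filter.mp hj).2]
    · rw [hw j (Finset.mem_filter.mp hj).2]
  have hρout : ptraceB (U * ρAB * Uᴴ)
      = ((1 / ∑ j ∈ lo, p j : ℝ) : ℂ) • ∑ j ∈ lo, (p j : ℂ) • outer (v j) := by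
    rw [hUρ, ptraceB_add, hmarg, ptraceB_sum, ← hscalar, Complex.ofReal_add, Complex.ofReal_one,
      add_smul, one_smul]
    simp_rw [ptraceB_smul, ptraceB_outer_prod, hb0, one_smul]
  have hσ : Uᴴ * (ptraceB (U * ρAB * Uᴴ) ⊗ₖ outer b0) * U
      = ∑ j ∈ lo, ((p j / ∑ i ∈ lo, p i : ℝ) : ℂ) • outer (ψ j) := by
    rw [hρout, smul_kronecker, Matrix.mul_smul, Matrix.smul_mul,
      conjTranspose_mul_sum_smul_outer_kronecker_mul hU.1 _ _ ψ v b0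
        fun j hj => hmap j (Finset.mem_filter.mp hj).2, Finset.smul_sum]
    refine Finset.sum_congr rfl fun j _ => ?_
    rw [smul_smul, ← Complex.ofReal_mul, one_div_mul_eq_div]
  rw [hσ, hρ, sqFidelity_sum_smul_outer hψ _ _ p _ hp0 (fun j => div_nonneg (hp0 j) hpd.le),
    Finset.univ_inter, sq_sum_sqrt_mul_div_sum _ p hp0]

/-- achievability of the fidelity bound Σ_{j≤d_A} p_j. -/
theorem stmt7 {A B : Type*} [Fintype A] [Fintype B] [DecidableEq A] [DecidableEq B]
    {k : ℕ} (hk : Fintype.card A < k)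
    (p : Fin k → ℝ) (hpa : Antitone p) (hp0 : ∀ j, 0 ≤ p j) (hp1 : ∑ j, p j = 1)
    (hpd : 0 < ∑ j ∈ Finset.univ.filter (fun j : Fin k => (j : ℕ) < Fintype.card A), p j)
    (ψ : Fin k → (A × B) → ℂ)
    (hψ : ∀ i j, star (ψ i) ⬝ᵥ ψ j = if i = j then 1 else 0)
    (v : Fin k → A → ℂ)
    (hv : ∀ i j : Fin k, (i : ℕ) < Fintype.card A → (j : ℕ) < Fintype.card A →
      star (v i) ⬝ᵥ v j = if i = j then 1 else 0)
    (b0 : B → ℂ) (hb0 : star b0 ⬝ᵥ b0 = 1)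
    (U : Matrix (A × B) (A × B) ℂ) (hU : Uᴴ * U = 1 ∧ U * Uᴴ = 1)
    (hmap : ∀ j : Fin k, (j : ℕ) < Fintype.card A →
      U *ᵥ ψ j = fun ab => v j ab.1 * b0 ab.2)
    (w : Fin k → (A × B) → ℂ)
    (hw : ∀ j : Fin k, Fintype.card A ≤ (j : ℕ) → w j = U *ᵥ ψ j)
    (hw0 : ∀ j : Fin k, Fintype.card A ≤ (j : ℕ) →
      star b0 ⬝ᵥ ((QAE.ptraceA (QAE.outer (w j))) *ᵥ b0) = 0)
    (hmarg :
      QAE.ptraceB (∑ j ∈ Finset.univ.filter (fun j : Fin k => Fintype.card A ≤ (j : ℕ)),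
          (p j : ℂ) • QAE.outer (w j))
        = (((∑ j ∈ Finset.univ.filter (fun j : Fin k => Fintype.card A ≤ (j : ℕ)), p j) /
            (∑ j ∈ Finset.univ.filter (fun j : Fin k => (j : ℕ) < Fintype.card A), p j) : ℝ) : ℂ)
          • ∑ j ∈ Finset.univ.filter (fun j : Fin k => (j : ℕ) < Fintype.card A),
              (p j : ℂ) • QAE.outer (v j))
    (ρAB : Matrix (A × B) (A × B) ℂ) (hρ : ρAB = ∑ j, (p j : ℂ) • QAE.outer (ψ j)) :
    QAE.sqFidelity ρAB (Uᴴ * ((QAE.ptraceB (U * ρAB * Uᴴ)) ⊗ₖ QAE.outer b0) * U)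
      = ∑ j ∈ Finset.univ.filter (fun j : Fin k => (j : ℕ) < Fintype.card A), p j :=
  stmt7_general p hp0 hp1 hpd ψ hψ v b0 hb0 U hU hmap w hw hmarg ρAB hρ
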